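/- Let W be a non-negative random variable with E W = 1 and E W² < ∞, and let W^e be a random variable having the equilibrium distribution with respect to W, defined on the same probability space. Then d_K(L(W^e), Exp(1)) ≤ E|W^e − W|, and the same bound holds for d_W(L(W^e), Exp(1)). -/

import Mathlib

/-!
Stein's method for the exponential law. When `E W = 1`, the equilibrium law of `W` is the first
marginal of `volume ⊗ μ` restricted to the region `{(x, ω) | 0 ≤ x < W ω}`, so Fubini gives
`E f'(We) = E f(W) - f 0`. If `f` solves the Stein equation `f' - f = h - E h(Z)`, `Z ~ Exp(1)`,
with `f 0 = 0`, then `E h(We) - E h(Z) = E f'(We) - E f(We) = E f(W) - E f(We)`, which is at most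
`E |We - W|` as soon as `f` is `1`-Lipschitz. For `h = 1_{(-∞, z]}` with `z ≥ 0` the solution is
`exp (min x z - z) - exp (-z)`; for `1`-Lipschitz `h` it is `x ↦ E h(Z) - E h(x + Z)`, which
inherits the Lipschitz constant of `h`. The second moment of `W` is what makes `We` integrable.
-/

open MeasureTheory ProbabilityTheory Set

noncomputable section

/-- The Kolmogorov distance between two measures on `ℝ`. -/
def dK (P Q : Measure ℝ) : ℝ :=
  ⨆ z : ℝ, |(P (Iic z)).toReal - (Q (Iic z)).toReal|

/-- The Wasserstein distance between two measures on `ℝ`: the supremum of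
`|∫ h dP - ∫ h dQ|` over all `1`-Lipschitz functions `h : ℝ → ℝ`. -/
def dW (P Q : Measure ℝ) : ℝ :=
  ⨆ h : {h : ℝ → ℝ // LipschitzWith 1 h}, |∫ x, h.1 x ∂P - ∫ x, h.1 x ∂Q|

/-- `We` has the equilibrium distribution with respect to `W`: its law has density
`P[W > x] / E W` on `[0,∞)` with respect to Lebesgue measure. -/
def IsEquilibrium {Ω : Type*} [MeasurableSpace Ω] (μ : Measure Ω) (W We : Ω → ℝ) : Prop :=
  Measure.map We μ =
    volume.withDensity (fun x =>
      if 0 ≤ x then μ {ω | x < W ω} / ENNReal.ofReal (∫ ω, W ω ∂μ) else 0)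

open Real Filter Topology
open scoped ENNReal NNReal

lemma LipschitzWith.integrable_comp {Ω E F : Type*} [MeasurableSpace Ω] {μ : Measure Ω}
    [IsFiniteMeasure μ] [NormedAddCommGroup E] [NormedAddCommGroup F] {K : ℝ≥0} {f : E → F}
    (hf : LipschitzWith K f) {X : Ω → E} (hX : Integrable X μ) :
    Integrable (fun ω => f (X ω)) μ := by
  refine ((integrable_const ‖f 0‖).add (hX.norm.const_mul K)).mono'
    (hf.continuous.comp_aestronglyMeasurable hX.1) (ae_of_all _ fun ω => ?_)
  have := hf.norm_sub_le (X ω) 0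
  rw [sub_zero] at this
  show ‖f (X ω)‖ ≤ ‖f 0‖ + K * ‖X ω‖
  linarith [norm_le_norm_add_norm_sub' (f (X ω)) (f 0)]

lemma LipschitzWith.abs_integral_comp_sub_le {Ω : Type*} [MeasurableSpace Ω] {μ : Measure Ω}
    [IsFiniteMeasure μ] {f : ℝ → ℝ} (hf : LipschitzWith 1 f) {X Y : Ω → ℝ}
    (hX : Integrable X μ) (hY : Integrable Y μ) :
    |∫ ω, f (X ω) ∂μ - ∫ ω, f (Y ω) ∂μ| ≤ ∫ ω, |Y ω - X ω| ∂μ := by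
  have hfX : Integrable (fun ω => f (X ω)) μ := hf.integrable_comp hX
  rw [← integral_sub hfX (hf.integrable_comp hY), ← Real.norm_eq_abs]
  refine norm_integral_le_of_norm_le (hY.sub hX).abs (ae_of_all _ fun ω => ?_)
  simpa [Real.dist_eq, abs_sub_comm] using hf.dist_le_mul (X ω) (Y ω)

lemma abs_exp_sub_exp_le {u v : ℝ} (hu : u ≤ 0) (hv : v ≤ 0) :
    |exp u - exp v| ≤ |u - v| := by
  simpa [Real.norm_eq_abs] using
    (convex_Iic (0 : ℝ)).norm_image_sub_le_of_norm_hasDerivWithin_le (C := 1)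
    (fun x _ => (hasDerivAt_exp x).hasDerivWithinAt)
    (fun x (hx : x ≤ 0) => by rwa [Real.norm_eq_abs, abs_of_pos (exp_pos x), exp_le_one_iff])
    hv hu

lemma hasDerivAt_integral_Ioi {φ : ℝ → ℝ} (hφ : Continuous φ)
    (hφi : ∀ a, IntegrableOn φ (Ioi a)) (x : ℝ) :
    HasDerivAt (fun a => ∫ t in Ioi a, φ t) (-φ x) x := by
  have htail :
      (fun a => ∫ t in Ioi a, φ t) = fun a => (∫ t in Ioi 0, φ t) - ∫ t in 0..a, φ t := by
    funext a
    rw [← intervalIntegral.integral_Ioi_sub_Ioi' (hφi 0) (hφi a), sub_sub_cancel]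
  rw [htail]
  exact (hφ.integral_hasStrictDerivAt 0 x).hasDerivAt.const_sub _

lemma integral_expMeasure_one (h : ℝ → ℝ) :
    ∫ x, h x ∂expMeasure 1 = ∫ s in Ioi 0, exp (-s) * h s := by
  change ∫ x, h x ∂volume.withDensity (exponentialPDF 1) = _
  rw [integral_withDensity_eq_integral_toReal_smul (f := exponentialPDF 1)
      (measurable_exponentialPDFReal 1).ennreal_ofReal
      (ae_of_all _ fun _ => ENNReal.ofReal_lt_top),
    ← integral_Ici_eq_integral_Ioi, ← integral_indicator measurableSet_Ici]
  congr 1 with x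
  by_cases hx : 0 ≤ x <;> simp [exponentialPDF_eq, hx, (exp_pos _).le]

lemma integral_indicator_Iic_expMeasure (z : ℝ) :
    ∫ y, (Iic z).indicator 1 y ∂expMeasure 1 = if 0 ≤ z then 1 - exp (-z) else 0 := by
  have := isProbabilityMeasure_expMeasure one_pos
  rw [integral_indicator_one measurableSet_Iic, ← cdf_eq_real, cdf_expMeasure_eq one_pos, one_mul]

section EquilibriumLaw

variable {Ω : Type*} [MeasurableSpace Ω] {μ : Measure Ω} [SFinite μ] {W We : Ω → ℝ}

def regionBelow (W : Ω → ℝ) : Set (ℝ × Ω) := {p | p.1 ∈ Ico 0 (W p.2)}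

lemma measurableSet_regionBelow (hW : Measurable W) : MeasurableSet (regionBelow W) :=
  (measurableSet_le measurable_const measurable_fst).inter
    (measurableSet_lt measurable_fst (hW.comp measurable_snd))

lemma map_fst_restrict_regionBelow (hW : Measurable W) :
    ((volume.prod μ).restrict (regionBelow W)).map Prod.fst =
      volume.withDensity (fun x => if 0 ≤ x then μ {ω | x < W ω} else 0) := by
  ext A hA
  rw [withDensity_apply _ hA, Measure.map_apply measurable_fst hA,
    Measure.restrict_apply (measurable_fst hA),
    Measure.prod_apply ((measurable_fst hA).inter (measurableSet_regionBelow hW)),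
    ← lintegral_indicator hA]
  refine lintegral_congr fun x => ?_
  by_cases hxA : x ∈ A <;> by_cases hx : 0 ≤ x <;>
    simp [hxA, hx, regionBelow, Set.preimage]

lemma IsEquilibrium.map_eq_map_fst (hWe : IsEquilibrium μ W We) (hW : Measurable W)
    (hEW : ∫ ω, W ω ∂μ = 1) :
    μ.map We = ((volume.prod μ).restrict (regionBelow W)).map Prod.fst := by
  rw [hWe, map_fst_restrict_regionBelow hW, hEW, ENNReal.ofReal_one]
  simp_rw [div_one]

lemma IsEquilibrium.lintegral_map_eq (hWe : IsEquilibrium μ W We) (hW : Measurable W)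
    (hEW : ∫ ω, W ω ∂μ = 1) {g : ℝ → ℝ≥0∞} (hg : Measurable g) :
    ∫⁻ x, g x ∂μ.map We = ∫⁻ ω, ∫⁻ x in Ico 0 (W ω), g x ∂volume ∂μ := by
  have hS := measurableSet_regionBelow hW
  rw [hWe.map_eq_map_fst hW hEW, lintegral_map hg measurable_fst, ← lintegral_indicator hS,
    lintegral_prod_symm' ((regionBelow W).indicator fun p => g p.1)
      ((hg.comp measurable_fst).indicator hS)]
  congr 1 with ω
  rw [← lintegral_indicator measurableSet_Ico]
  rfl

lemma IsEquilibrium.integral_map_eq (hWe : IsEquilibrium μ W We) (hW : Measurable W)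
    (hEW : ∫ ω, W ω ∂μ = 1) {g : ℝ → ℝ} (hg : Integrable g (μ.map We)) :
    ∫ x, g x ∂μ.map We = ∫ ω, ∫ x in Ico 0 (W ω), g x ∂volume ∂μ := by
  have hS := measurableSet_regionBelow hW
  rw [hWe.map_eq_map_fst hW hEW] at hg ⊢
  rw [integral_map measurable_fst.aemeasurable hg.aestronglyMeasurable, ← integral_indicator hS,
    integral_prod_symm ((regionBelow W).indicator fun p => g p.1)
      ((integrable_indicator_iff hS).2 (hg.comp_measurable measurable_fst))]
  congr 1 with ω
  rw [← integral_indicator measurableSet_Ico]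
  rfl

lemma IsEquilibrium.integrable_id (hWe : IsEquilibrium μ W We) (hW : Measurable W)
    (hEW : ∫ ω, W ω ∂μ = 1) (hW2 : Integrable (fun ω => W ω ^ 2) μ) :
    Integrable id (μ.map We) := by
  refine ⟨aestronglyMeasurable_id, ?_⟩
  change ∫⁻ x, ‖x‖ₑ ∂μ.map We < ∞
  rw [hWe.lintegral_map_eq hW hEW measurable_enorm]
  refine lt_of_le_of_lt (lintegral_mono fun ω => ?_) hW2.hasFiniteIntegral
  calc ∫⁻ x in Ico 0 (W ω), ‖x‖ₑ
      ≤ ∫⁻ _ in Ico 0 (W ω), ‖W ω‖ₑ := by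
        refine setLIntegral_mono measurable_const fun x hx => ?_
        simp only [Real.enorm_eq_ofReal_abs]
        exact ENNReal.ofReal_le_ofReal (abs_le_abs_of_nonneg hx.1 hx.2.le)
    _ ≤ ‖W ω‖ₑ * ‖W ω‖ₑ := by
        rw [setLIntegral_const, Real.volume_Ico, sub_zero, Real.enorm_eq_ofReal_abs]
        exact mul_le_mul_right (ENNReal.ofReal_le_ofReal (le_abs_self _)) _
    _ = ‖W ω ^ 2‖ₑ := by rw [enorm_pow, sq]

end EquilibriumLaw

/-- `f` solves the Stein equation `f' - f = h - E h(Z)`, `Z ~ Exp(1)`, on `[0, ∞)` with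
`f 0 = 0`, written in integrated form. -/
def IsExpSteinSolution (h f : ℝ → ℝ) : Prop :=
  ∀ b, 0 ≤ b → ∫ x in Ico 0 b, (f x + h x - ∫ y, h y ∂expMeasure 1) = f b

theorem IsEquilibrium.abs_integral_sub_le_of_isExpSteinSolution {Ω : Type*} [MeasurableSpace Ω]
    {μ : Measure Ω} [IsProbabilityMeasure μ] {W We : Ω → ℝ} (hWe : IsEquilibrium μ W We)
    (hW : Measurable W) (hWem : Measurable We) (hWnn : ∀ ω, 0 ≤ W ω) (hWint : Integrable W μ)
    (hW2 : Integrable (fun ω => W ω ^ 2) μ) (hEW : ∫ ω, W ω ∂μ = 1) {f h : ℝ → ℝ}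
    (hf : LipschitzWith 1 f) (hsol : IsExpSteinSolution h f) (hh : Integrable h (μ.map We)) :
    |∫ x, h x ∂μ.map We - ∫ x, h x ∂expMeasure 1| ≤ ∫ ω, |We ω - W ω| ∂μ := by
  have := Measure.isProbabilityMeasure_map (μ := μ) hWem.aemeasurable
  set c := ∫ x, h x ∂expMeasure 1
  have hid := hWe.integrable_id hW hEW hW2
  have hfν : Integrable f (μ.map We) := hf.integrable_comp hid
  have hg : Integrable (fun x => f x + h x - c) (μ.map We) :=
    (hfν.add hh).sub (integrable_const c)
  have hequil : ∫ x, (f x + h x - c) ∂μ.map We = ∫ ω, f (W ω) ∂μ := by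
    rw [hWe.integral_map_eq hW hEW hg]
    exact integral_congr_ae (ae_of_all _ fun ω => hsol _ (hWnn ω))
  have hdiff : ∫ x, h x ∂μ.map We - c = ∫ ω, f (W ω) ∂μ - ∫ ω, f (We ω) ∂μ := by
    rw [← hequil, integral_sub (f := fun x => f x + h x) (hfν.add hh) (integrable_const c),
      integral_add hfν hh, integral_const,
      integral_map hWem.aemeasurable hf.continuous.aestronglyMeasurable]
    simp only [probReal_univ, one_smul]
    ring
  rw [hdiff]
  exact hf.abs_integral_comp_sub_le hWint (hid.comp_measurable hWem)

section SteinIic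

variable {z : ℝ}

def expSteinSolutionIic (z x : ℝ) : ℝ := exp (min x z - z) - exp (-z)

lemma lipschitzWith_expSteinSolutionIic (z : ℝ) : LipschitzWith 1 (expSteinSolutionIic z) := by
  refine LipschitzWith.of_dist_le_mul fun a b => ?_
  simp only [expSteinSolutionIic, Real.dist_eq, NNReal.coe_one, one_mul, sub_sub_sub_cancel_right]
  calc |exp (min a z - z) - exp (min b z - z)| ≤ |(min a z - z) - (min b z - z)| :=
        abs_exp_sub_exp_le (by simp) (by simp)
    _ = |min a z - min b z| := by rw [sub_sub_sub_cancel_right]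
    _ ≤ |a - b| := by simpa using abs_min_sub_min_le_max a z b z

lemma hasDerivAt_expSteinSolutionIic {x : ℝ} (hx : x ≠ z) :
    HasDerivAt (expSteinSolutionIic z) ((Iic z).indicator (fun y => exp (y - z)) x) x := by
  rcases hx.lt_or_gt with hlt | hgt
  · have hloc : expSteinSolutionIic z =ᶠ[𝓝 x] fun y => exp (y - z) - exp (-z) := by
      filter_upwards [Iio_mem_nhds hlt] with y (hy : y < z)
      simp [expSteinSolutionIic, min_eq_left hy.le]
    rw [indicator_of_mem (mem_Iic.2 hlt.le)]
    simpa using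
      (((hasDerivAt_id x).sub_const z).exp.sub_const (exp (-z))).congr_of_eventuallyEq hloc
  · have hloc : expSteinSolutionIic z =ᶠ[𝓝 x] fun _ => 1 - exp (-z) := by
      filter_upwards [Ioi_mem_nhds hgt] with y (hy : z < y)
      simp [expSteinSolutionIic, min_eq_right hy.le]
    rw [indicator_of_notMem (notMem_Iic.2 hgt)]
    exact (hasDerivAt_const x _).congr_of_eventuallyEq hloc

lemma isExpSteinSolution_expSteinSolutionIic (hz : 0 ≤ z) :
    IsExpSteinSolution ((Iic z).indicator 1) (expSteinSolutionIic z) := by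
  intro b hb
  have hrhs : ∀ x, expSteinSolutionIic z x + (Iic z).indicator 1 x - (1 - exp (-z)) =
      (Iic z).indicator (fun y => exp (y - z)) x := by
    intro x
    by_cases hx : x ≤ z
    · simp [expSteinSolutionIic, hx]
      ring
    · simp [expSteinSolutionIic, hx, min_eq_right (le_of_not_ge hx)]
  have hint : IntervalIntegrable ((Iic z).indicator fun y => exp (y - z)) volume 0 b :=
    ((continuous_exp.comp (continuous_sub_right z)).integrableOn_uIcc.indicator
      measurableSet_Iic).intervalIntegrable
  rw [integral_indicator_Iic_expMeasure, if_pos hz]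
  simp_rw [hrhs]
  rw [setIntegral_congr_set Ico_ae_eq_Ioc, ← intervalIntegral.integral_of_le hb,
    integral_eq_of_hasDerivAt_off_countable_of_le _ _ hb (countable_singleton z)
      (lipschitzWith_expSteinSolutionIic z).continuous.continuousOn
      (fun x hx => hasDerivAt_expSteinSolutionIic hx.2) hint]
  simp [expSteinSolutionIic, hz]

end SteinIic

theorem exists_lipschitzWith_isExpSteinSolution_indicator_Iic (z : ℝ) :
    ∃ f, LipschitzWith 1 f ∧ IsExpSteinSolution ((Iic z).indicator 1) f := by
  rcases le_or_gt 0 z with hz | hz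
  · exact ⟨_, lipschitzWith_expSteinSolutionIic z, isExpSteinSolution_expSteinSolutionIic hz⟩
  · refine ⟨0, (LipschitzWith.const 0).weaken zero_le_one, fun b _ => ?_⟩
    rw [integral_indicator_Iic_expMeasure, if_neg hz.not_ge]
    refine setIntegral_eq_zero_of_forall_eq_zero fun x hx => ?_
    simpa using hz.trans_le hx.1

section SteinLipschitz

variable {h : ℝ → ℝ} {K : ℝ≥0}

def shiftedExpMean (h : ℝ → ℝ) (x : ℝ) : ℝ := ∫ s in Ioi 0, exp (-s) * h (x + s)

lemma integral_Ioi_exp_neg_mul_eq (h : ℝ → ℝ) (x : ℝ) :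
    ∫ t in Ioi x, exp (-t) * h t = exp (-x) * shiftedExpMean h x := by
  rw [← (measurePreserving_add_left volume x).setIntegral_preimage_emb
    (measurableEmbedding_addLeft x), preimage_const_add_Ioi, sub_self, shiftedExpMean,
    ← integral_const_mul]
  simp_rw [neg_add, exp_add, mul_assoc]

lemma LipschitzWith.integrableOn_exp_neg_mul_comp_add (hh : LipschitzWith K h) (x : ℝ) :
    IntegrableOn (fun s => exp (-s) * h (x + s)) (Ioi 0) := by
  have hs : IntegrableOn (fun s => exp (-s) * s) (Ioi 0) := by
    have := Real.GammaIntegral_convergent (s := 2) two_pos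
    norm_num at this
    exact this
  have := hh.continuous
  refine (((integrableOn_exp_neg_Ioi 0).const_mul |h x|).add (hs.const_mul K)).mono'
    (by fun_prop) ((ae_restrict_iff' measurableSet_Ioi).2 (ae_of_all _ fun s (hs : 0 < s) => ?_))
  have hlip : |h (x + s)| ≤ |h x| + K * s := by
    have := hh.dist_le_mul (x + s) x
    rw [Real.dist_eq, Real.dist_eq, add_sub_cancel_left, abs_of_pos hs] at this
    linarith [abs_sub_abs_le_abs_sub (h (x + s)) (h x)]
  rw [norm_mul, Real.norm_of_nonneg (exp_pos _).le, Real.norm_eq_abs]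
  calc exp (-s) * |h (x + s)| ≤ exp (-s) * (|h x| + K * s) := by gcongr
    _ = |h x| * exp (-s) + K * (exp (-s) * s) := by ring

lemma LipschitzWith.integrableOn_Ioi_exp_neg_mul (hh : LipschitzWith K h) (x : ℝ) :
    IntegrableOn (fun t => exp (-t) * h t) (Ioi x) := by
  rw [← (measurePreserving_add_left volume x).integrableOn_comp_preimage
    (measurableEmbedding_addLeft x), preimage_const_add_Ioi, sub_self]
  refine IntegrableOn.congr_fun ((hh.integrableOn_exp_neg_mul_comp_add x).const_mul (exp (-x)))
    (fun s _ => ?_) measurableSet_Ioi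
  simp only [Function.comp_apply, neg_add, exp_add]
  ring

lemma LipschitzWith.lipschitzWith_shiftedExpMean (hh : LipschitzWith K h) :
    LipschitzWith K (shiftedExpMean h) := by
  refine LipschitzWith.of_dist_le_mul fun a b => ?_
  rw [Real.dist_eq, shiftedExpMean, shiftedExpMean, ← integral_sub
    (hh.integrableOn_exp_neg_mul_comp_add a) (hh.integrableOn_exp_neg_mul_comp_add b),
    ← Real.norm_eq_abs]
  calc ‖∫ s in Ioi 0, (exp (-s) * h (a + s) - exp (-s) * h (b + s))‖
      ≤ ∫ s in Ioi 0, exp (-s) * (K * dist a b) := by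
        refine norm_integral_le_of_norm_le
          ((integrableOn_exp_neg_Ioi 0).mul_const _) (ae_of_all _ fun s => ?_)
        rw [← mul_sub, norm_mul, Real.norm_of_nonneg (exp_pos _).le]
        gcongr
        simpa [Real.dist_eq] using hh.dist_le_mul (a + s) (b + s)
    _ = K * dist a b := by rw [integral_mul_const, integral_exp_neg_Ioi_zero, one_mul]

lemma LipschitzWith.hasDerivAt_shiftedExpMean (hh : LipschitzWith K h) (x : ℝ) :
    HasDerivAt (shiftedExpMean h) (shiftedExpMean h x - h x) x := by
  have hexp : shiftedExpMean h = fun y => exp y * ∫ t in Ioi y, exp (-t) * h t := by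
    funext y
    rw [integral_Ioi_exp_neg_mul_eq, ← mul_assoc, ← exp_add, add_neg_cancel, exp_zero, one_mul]
  have := hh.continuous
  have hJ := hasDerivAt_integral_Ioi (by fun_prop) hh.integrableOn_Ioi_exp_neg_mul x
  rw [hexp]
  refine ((hasDerivAt_exp x).mul hJ).congr_deriv ?_
  rw [mul_neg, ← mul_assoc, ← exp_add, add_neg_cancel, exp_zero, one_mul, ← sub_eq_add_neg]

theorem LipschitzWith.exists_isExpSteinSolution (hh : LipschitzWith K h) :
    ∃ f, LipschitzWith K f ∧ IsExpSteinSolution h f := by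
  set u := shiftedExpMean h
  refine ⟨fun x => u 0 - u x, LipschitzWith.of_dist_le_mul fun a b => ?_, fun b hb => ?_⟩
  · rw [dist_sub_left]
    exact hh.lipschitzWith_shiftedExpMean.dist_le_mul a b
  have hc : ∫ y, h y ∂expMeasure 1 = u 0 := by
    simp [integral_expMeasure_one, u, shiftedExpMean]
  have hderiv : ∀ x, HasDerivAt (fun x => u 0 - u x) (u 0 - u x + h x - u 0) x := fun x =>
    ((hh.hasDerivAt_shiftedExpMean x).const_sub (u 0)).congr_deriv (by ring)
  rw [hc, setIntegral_congr_set Ico_ae_eq_Ioc, ← intervalIntegral.integral_of_le hb,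
    intervalIntegral.integral_eq_sub_of_hasDerivAt (fun x _ => hderiv x)]
  · simp
  · exact ((continuous_const.sub hh.lipschitzWith_shiftedExpMean.continuous).add
      hh.continuous |>.sub continuous_const).intervalIntegrable 0 b

end SteinLipschitz

theorem bounds_equilibrium_law_mean_difference
    {Ω : Type*} [MeasurableSpace Ω] (μ : Measure Ω) [IsProbabilityMeasure μ]
    (W We : Ω → ℝ) (hWmeas : Measurable W) (hWemeas : Measurable We)
    (hWnonneg : ∀ ω, 0 ≤ W ω) (hWint : Integrable W μ)
    (hW2 : Integrable (fun ω => (W ω) ^ 2) μ)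
    (hEW : ∫ ω, W ω ∂μ = 1)
    (hWe : IsEquilibrium μ W We) :
    dK (Measure.map We μ) (expMeasure 1) ≤ ∫ ω, |We ω - W ω| ∂μ ∧
    dW (Measure.map We μ) (expMeasure 1) ≤ ∫ ω, |We ω - W ω| ∂μ := by
  have hbound_nonneg : 0 ≤ ∫ ω, |We ω - W ω| ∂μ := integral_nonneg fun ω => abs_nonneg _
  constructor
  · refine Real.iSup_le (fun z => ?_) hbound_nonneg
    obtain ⟨f, hf, hsol⟩ := exists_lipschitzWith_isExpSteinSolution_indicator_Iic z
    have := hWe.abs_integral_sub_le_of_isExpSteinSolution hWmeas hWemeas hWnonneg hWint hW2 hEW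
      hf hsol ((integrable_const 1).indicator measurableSet_Iic)
    rwa [integral_indicator_one measurableSet_Iic, integral_indicator_one measurableSet_Iic]
      at this
  · refine Real.iSup_le (fun ⟨h, hh⟩ => ?_) hbound_nonneg
    obtain ⟨f, hf, hsol⟩ := hh.exists_isExpSteinSolution
    exact hWe.abs_integral_sub_le_of_isExpSteinSolution hWmeas hWemeas hWnonneg hWint hW2 hEW
      hf hsol (hh.integrable_comp (hWe.integrable_id hWmeas hEW hW2))

end
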